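/- arXiv:2203.06358 — 6 statements merged into one kernel-verified Lean document; each statement's English description precedes it below -/
import Mathlib

section
/- Define F(t,ρ) = ρ√t + √(1−ρ²)·√(G−t) − √(G−t) for fixed G > 0, with t ∈ [0,G] and ρ ∈ [0,1]. Then for each fixed ρ, F(·,ρ) is monotonically nondecreasing in t on [Gρ, G]. -/
theorem stmt_1 (G ρ : ℝ) (hG : 0 < G) (hρ0 : 0 ≤ ρ) (hρ1 : ρ ≤ 1) :
    MonotoneOn
      (fun t : ℝ => ρ * Real.sqrt t + Real.sqrt (1 - ρ ^ 2) * Real.sqrt (G - t)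
        - Real.sqrt (G - t))
      (Set.Icc (G * ρ) G) := by
  intro x hx y hy hxy
  simp only
  have h1 : ρ * Real.sqrt x ≤ ρ * Real.sqrt y :=
    mul_le_mul_of_nonneg_left (Real.sqrt_le_sqrt hxy) hρ0
  have hc : Real.sqrt (1 - ρ ^ 2) - 1 ≤ 0 := by
    have : Real.sqrt (1 - ρ ^ 2) ≤ 1 :=
      Real.sqrt_le_one.mpr (by nlinarith)
    linarith
  have hs : Real.sqrt (G - y) ≤ Real.sqrt (G - x) :=
    Real.sqrt_le_sqrt (by linarith)
  have h2 : (Real.sqrt (1 - ρ ^ 2) - 1) * Real.sqrt (G - x) ≤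
      (Real.sqrt (1 - ρ ^ 2) - 1) * Real.sqrt (G - y) :=
    mul_le_mul_of_nonpos_left hs hc
  nlinarith [h1, h2]
end

section
/- Let h_c, h_r ∈ ℂ^M be nonzero vectors, Γ > 0, P > 0 with P·‖h_r‖² > Γ, and suppose |h_cᴴh_r|²/(‖h_c‖²‖h_r‖²) < Γ/(P‖h_r‖²). Then any maximizer w* of |h_cᴴw|² subject to |h_rᴴw|² ≥ Γ and ‖w‖² ≤ P satisfies ‖w*‖² = P and |h_rᴴw*|² = Γ (both constraints are active at the optimum). -/
open scoped InnerProductSpace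

lemma aux_poly (P A e H : ℝ) (he : 0 < e) (hA : 0 < A) (hs : A^2 < P*H^2) :
    A^2 * (P + 2*e*A + e^2*H^2) < P * (A + e*H^2)^2 := by
  nlinarith [mul_pos (mul_pos he hA) (sub_pos.mpr hs),
    mul_nonneg (mul_nonneg (sq_nonneg e) (sq_nonneg H)) (sub_pos.mpr hs).le]

set_option maxHeartbeats 1000000 in
theorem stmt_2 {M : ℕ} (h_c h_r : EuclideanSpace ℂ (Fin M))
    (hc : h_c ≠ 0) (hr : h_r ≠ 0) (Γ P : ℝ) (hΓ : 0 < Γ) (hP : 0 < P)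
    (hfeas : Γ < P * ‖h_r‖ ^ 2)
    (hcorr : ‖⟪h_c, h_r⟫_ℂ‖ ^ 2 / (‖h_c‖ ^ 2 * ‖h_r‖ ^ 2) < Γ / (P * ‖h_r‖ ^ 2))
    (w : EuclideanSpace ℂ (Fin M))
    (hwP : ‖w‖ ^ 2 ≤ P) (hwΓ : Γ ≤ ‖⟪h_r, w⟫_ℂ‖ ^ 2)
    (hopt : ∀ v : EuclideanSpace ℂ (Fin M),
      ‖v‖ ^ 2 ≤ P → Γ ≤ ‖⟪h_r, v⟫_ℂ‖ ^ 2 → ‖⟪h_c, v⟫_ℂ‖ ^ 2 ≤ ‖⟪h_c, w⟫_ℂ‖ ^ 2) :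
    ‖w‖ ^ 2 = P ∧ ‖⟪h_r, w⟫_ℂ‖ ^ 2 = Γ := by
  have hrn : (0:ℝ) < ‖h_r‖ := norm_pos_iff.mpr hr
  have hcn : (0:ℝ) < ‖h_c‖ := norm_pos_iff.mpr hc
  -- Step 1: the objective at the optimum is nonzero
  have ha0 : ⟪h_c, w⟫_ℂ ≠ 0 := by
    intro h0
    have key : ∀ v : EuclideanSpace ℂ (Fin M),
        ‖v‖ ^ 2 ≤ P → Γ ≤ ‖⟪h_r, v⟫_ℂ‖ ^ 2 → ⟪h_c, v⟫_ℂ = 0 := by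
      intro v h1 h2
      have h3 := hopt v h1 h2
      rw [h0] at h3
      simp only [norm_zero] at h3
      have h4 : ‖⟪h_c, v⟫_ℂ‖ = 0 := by
        have := norm_nonneg ⟪h_c, v⟫_ℂ; nlinarith
      exact norm_eq_zero.mp h4
    set c : ℝ := Real.sqrt Γ / ‖h_r‖^2 with hcdef
    have hcpos : 0 < c := div_pos (Real.sqrt_pos.mpr hΓ) (by positivity)
    have hsqΓ : Real.sqrt Γ ^ 2 = Γ := Real.sq_sqrt hΓ.le
    have hv1r : ⟪h_r, (c:ℂ) • h_r⟫_ℂ = (c:ℂ) * (‖h_r‖:ℂ)^2 := by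
      rw [inner_smul_right, inner_self_eq_norm_sq_to_K]; norm_num
    have hn1 : ‖(c:ℂ) • h_r‖^2 = Γ / ‖h_r‖^2 := by
      rw [norm_smul]
      simp only [Complex.norm_real, Real.norm_eq_abs, abs_of_nonneg hcpos.le]
      rw [hcdef]; field_simp; nlinarith [hsqΓ]
    have hΓ1 : ‖⟪h_r, (c:ℂ) • h_r⟫_ℂ‖^2 = Γ := by
      rw [hv1r]; rw [norm_mul]
      simp only [Complex.norm_real, Real.norm_eq_abs, abs_of_nonneg hcpos.le, norm_pow,
        abs_of_nonneg hrn.le]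
      rw [hcdef]; field_simp; exact hsqΓ
    have hfeas1 : ‖(c:ℂ) • h_r‖^2 ≤ P := by
      rw [hn1]; rw [div_le_iff₀ (by positivity)]; nlinarith
    have h1 := key _ hfeas1 (le_of_eq hΓ1.symm)
    rw [inner_smul_right] at h1
    have hz0 : ⟪h_c, h_r⟫_ℂ = 0 := by
      rcases mul_eq_zero.mp h1 with h | h
      · exact absurd h (by exact_mod_cast hcpos.ne')
      · exact h
    have hPub : Γ / ‖h_r‖^2 < P := (div_lt_iff₀ (by positivity)).mpr (by nlinarith)
    have hquotpos : 0 < (P - Γ/‖h_r‖^2)/‖h_c‖^2 := div_pos (by linarith) (by positivity)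
    set t : ℝ := Real.sqrt ((P - Γ/‖h_r‖^2)/‖h_c‖^2) with htdef
    have htpos : 0 < t := Real.sqrt_pos.mpr hquotpos
    have ht2 : t^2 * ‖h_c‖^2 = P - Γ/‖h_r‖^2 := by
      rw [htdef, Real.sq_sqrt hquotpos.le]; field_simp
    set v2 : EuclideanSpace ℂ (Fin M) := (c:ℂ) • h_r + (t:ℂ) • h_c with hv2def
    have hzrc : ⟪h_r, h_c⟫_ℂ = 0 := by
      rw [← inner_conj_symm, hz0]; simp
    have hv2r : ⟪h_r, v2⟫_ℂ = (c:ℂ) * (‖h_r‖:ℂ)^2 := by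
      rw [hv2def, inner_add_right, hv1r, inner_smul_right, hzrc]; ring
    have hv2n : ‖v2‖^2 ≤ P := by
      rw [hv2def, norm_add_sq (𝕜 := ℂ)]
      have : ⟪(c:ℂ) • h_r, (t:ℂ) • h_c⟫_ℂ = 0 := by
        rw [inner_smul_right, inner_smul_left, hzrc]; ring
      rw [this]
      have h2 : ‖(t:ℂ) • h_c‖^2 = t^2*‖h_c‖^2 := by
        rw [norm_smul]; simp [abs_of_nonneg htpos.le]; ring
      rw [h2, hn1, ht2]; simp
    have hv2Γ : Γ ≤ ‖⟪h_r, v2⟫_ℂ‖^2 := by rw [hv2r, ← hv1r, hΓ1]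
    have h2 := key _ hv2n hv2Γ
    rw [hv2def, inner_add_right, inner_smul_right, inner_smul_right, hz0,
      inner_self_eq_norm_sq_to_K] at h2
    simp at h2
    rcases h2 with h | h
    · exact htpos.ne' (by exact_mod_cast h)
    · exact hc h
  have hw0 : w ≠ 0 := by rintro rfl; simp at ha0
  -- Step 2: power constraint is active
  have hwPe : ‖w‖ ^ 2 = P := by
    by_contra hne
    have hlt : ‖w‖^2 < P := lt_of_le_of_ne hwP hne
    have hwn : 0 < ‖w‖ := norm_pos_iff.mpr hw0
    set t : ℝ := Real.sqrt P / ‖w‖ with htdef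
    have ht1 : 1 < t := by
      rw [htdef, lt_div_iff₀ hwn]
      nlinarith [Real.sq_sqrt hP.le, Real.sqrt_nonneg P, hwn]
    have ht2 : t^2 * ‖w‖^2 = P := by
      rw [htdef]; field_simp; exact Real.sq_sqrt hP.le
    set v : EuclideanSpace ℂ (Fin M) := (t:ℂ) • w with hvdef
    have hvn : ‖v‖^2 = P := by
      rw [hvdef, norm_smul]
      simp only [Complex.norm_real, Real.norm_eq_abs, abs_of_nonneg (by linarith : (0:ℝ) ≤ t)]
      rw [mul_pow]; exact ht2
    have hvr : ‖⟪h_r, v⟫_ℂ‖^2 = t^2 * ‖⟪h_r, w⟫_ℂ‖^2 := by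
      rw [hvdef, inner_smul_right, norm_mul, mul_pow]
      simp [abs_of_nonneg (by linarith : (0:ℝ) ≤ t)]
    have hvc : ‖⟪h_c, v⟫_ℂ‖^2 = t^2 * ‖⟪h_c, w⟫_ℂ‖^2 := by
      rw [hvdef, inner_smul_right, norm_mul, mul_pow]
      simp [abs_of_nonneg (by linarith : (0:ℝ) ≤ t)]
    clear_value t v
    have hfr : Γ ≤ ‖⟪h_r, v⟫_ℂ‖^2 := by rw [hvr]; nlinarith [norm_nonneg ⟪h_r, w⟫_ℂ]
    have hthis := hopt v hvn.le hfr
    rw [hvc] at hthis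
    have hap : 0 < ‖⟪h_c, w⟫_ℂ‖ := norm_pos_iff.mpr ha0
    have ht2' : 1 < t^2 := by nlinarith
    nlinarith [mul_lt_mul_of_pos_right ht2' (pow_pos hap 2)]
  -- Step 3: strict Cauchy-Schwarz (w is not a multiple of h_c)
  have hstrict : ‖⟪h_c, w⟫_ℂ‖^2 < P * ‖h_c‖^2 := by
    have hCS : ‖⟪h_c, w⟫_ℂ‖ ≤ ‖h_c‖ * ‖w‖ := norm_inner_le_norm _ _
    rcases lt_or_eq_of_le hCS with h | h
    · nlinarith [norm_nonneg ⟪h_c, w⟫_ℂ, norm_nonneg h_c, norm_nonneg w]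
    · exfalso
      obtain ⟨r, hr0, hw⟩ := (norm_inner_eq_norm_iff hc hw0).mp h
      have hbz : ⟪h_r, w⟫_ℂ = r * ⟪h_r, h_c⟫_ℂ := by rw [hw, inner_smul_right]
      have hzz : ‖⟪h_r, h_c⟫_ℂ‖ = ‖⟪h_c, h_r⟫_ℂ‖ := by
        rw [← inner_conj_symm]; exact RCLike.norm_conj _
      have hwn2 : ‖r‖^2 * ‖h_c‖^2 = P := by
        rw [← hwPe, hw, norm_smul, mul_pow]
      have hcorr' : ‖⟪h_c, h_r⟫_ℂ‖ ^ 2 * (P * ‖h_r‖ ^ 2) < Γ * (‖h_c‖ ^ 2 * ‖h_r‖ ^ 2) :=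
        (div_lt_div_iff₀ (by positivity) (by positivity)).mp hcorr
      have hb2 : ‖⟪h_r, w⟫_ℂ‖^2 = ‖r‖^2 * ‖⟪h_c, h_r⟫_ℂ‖^2 := by
        rw [hbz, norm_mul, mul_pow, hzz]
      have h1 : ‖⟪h_c, h_r⟫_ℂ‖^2 * P < Γ * ‖h_c‖^2 := by
        nlinarith [pow_pos hrn 2]
      have h3 : Γ * ‖h_c‖^2 ≤ ‖⟪h_r, w⟫_ℂ‖^2 * ‖h_c‖^2 := by nlinarith [pow_pos hcn 2]
      rw [hb2] at h3
      have h4 : ‖r‖^2 * ‖⟪h_c, h_r⟫_ℂ‖^2 * ‖h_c‖^2 = ‖⟪h_c, h_r⟫_ℂ‖^2 * P := by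
        rw [← hwn2]; ring
      linarith
  refine ⟨hwPe, ?_⟩
  -- Step 4: sensing constraint is active
  by_contra hne
  have hgt : Γ < ‖⟪h_r, w⟫_ℂ‖ ^ 2 := lt_of_le_of_ne hwΓ (fun h => hne h.symm)
  set a : ℂ := ⟪h_c, w⟫_ℂ with hadef
  set b : ℂ := ⟪h_r, w⟫_ℂ with hbdef
  set z : ℂ := ⟪h_r, h_c⟫_ℂ with hzdef
  set A : ℝ := ‖a‖ with hAdef
  have hApos : 0 < A := norm_pos_iff.mpr ha0
  set s : ℂ := a / (A:ℂ) with hsdef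
  have hAne : (A:ℂ) ≠ 0 := by exact_mod_cast hApos.ne'
  have hs1 : ‖s‖ = 1 := by
    rw [hsdef, norm_div]; simp only [hAdef, Complex.norm_real, Real.norm_eq_abs,
      abs_of_nonneg (norm_nonneg a)]
    exact div_self (norm_ne_zero_iff.mpr ha0)
  have hsa : a = s * (A:ℂ) := by rw [hsdef]; field_simp
  -- the continuity argument
  set g : ℝ → ℝ := fun ε => P * ‖b + (ε:ℂ) * s * z‖^2 - Γ * (P + 2*ε*A + ε^2*‖h_c‖^2)
    with hgdef
  have hc0 : Continuous fun ε : ℝ => b + (ε:ℂ) * s * z :=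
    continuous_const.add ((Complex.continuous_ofReal.mul continuous_const).mul continuous_const)
  have hgc : Continuous g :=
    (continuous_const.mul ((hc0.norm).pow 2)).sub (continuous_const.mul
      ((continuous_const.add ((continuous_const.mul continuous_id).mul continuous_const)).add
        ((continuous_pow 2).mul continuous_const)))
  have hg0 : 0 < g 0 := by
    have h00 : ((0:ℝ):ℂ) * s * z = 0 := by norm_num
    simp only [hgdef, h00, add_zero]
    nlinarith
  have hev : ∀ᶠ ε in nhdsWithin (0:ℝ) (Set.Ioi 0), 0 < g ε :=
    (hgc.continuousAt.eventually (eventually_gt_nhds hg0)).filter_mono nhdsWithin_le_nhds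
  obtain ⟨ε, hgε, hεpos⟩ := (hev.and (eventually_mem_nhdsWithin)).exists
  rw [Set.mem_Ioi] at hεpos
  -- the perturbed vector
  set u : EuclideanSpace ℂ (Fin M) := w + ((ε:ℂ) * s) • h_c with hudef
  have e_uc : ⟪h_c, u⟫_ℂ = a + (ε:ℂ) * s * (‖h_c‖:ℂ)^2 := by
    rw [hudef, inner_add_right, inner_smul_right, inner_self_eq_norm_sq_to_K]
    norm_cast
  have e_ur : ⟪h_r, u⟫_ℂ = b + (ε:ℂ) * s * z := by
    rw [hudef, inner_add_right, inner_smul_right]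
  have h1 : a * (starRingEnd ℂ) a = ((A^2 : ℝ) : ℂ) := by
    rw [Complex.mul_conj, Complex.normSq_eq_norm_sq]
  have hre : ⟪w, ((ε:ℂ) * s) • h_c⟫_ℂ = ((ε * A : ℝ) : ℂ) := by
    rw [inner_smul_right, ← inner_conj_symm, ← hadef, hsdef]
    calc (ε:ℂ) * (a / (A:ℂ)) * (starRingEnd ℂ) a
        = (ε:ℂ) * (a * (starRingEnd ℂ) a) / (A:ℂ) := by ring
      _ = (ε:ℂ) * ((A^2:ℝ):ℂ) / (A:ℂ) := by rw [h1]
      _ = ((ε * A : ℝ) : ℂ) := by push_cast; field_simp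
  have e_un : ‖u‖^2 = P + 2*ε*A + ε^2*‖h_c‖^2 := by
    have h2 : ‖((ε:ℂ) * s) • h_c‖^2 = ε^2 * ‖h_c‖^2 := by
      rw [norm_smul, norm_mul, hs1, mul_pow, mul_pow]
      simp [abs_of_nonneg hεpos.le]
    rw [hudef, norm_add_sq (𝕜 := ℂ), hre, h2, hwPe]
    norm_num
    ring
  have hNpos : 0 < ‖u‖^2 := by rw [e_un]; nlinarith
  have hu0 : u ≠ 0 := by
    intro h; rw [h] at hNpos; simp at hNpos
  have hun : 0 < ‖u‖ := norm_pos_iff.mpr hu0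
  set τ : ℝ := Real.sqrt P / ‖u‖ with hτdef
  have hτpos : 0 < τ := div_pos (Real.sqrt_pos.mpr hP) hun
  have hτ2 : τ^2 * ‖u‖^2 = P := by rw [hτdef]; field_simp; exact Real.sq_sqrt hP.le
  set v : EuclideanSpace ℂ (Fin M) := (τ:ℂ) • u with hvdef
  have hvn : ‖v‖^2 = P := by
    rw [hvdef, norm_smul, mul_pow]
    simp only [Complex.norm_real, Real.norm_eq_abs, abs_of_nonneg hτpos.le]
    exact hτ2
  have hvr : ‖⟪h_r, v⟫_ℂ‖^2 = τ^2 * ‖b + (ε:ℂ) * s * z‖^2 := by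
    rw [hvdef, inner_smul_right, e_ur, norm_mul, mul_pow]
    simp [abs_of_nonneg hτpos.le]
  have hfr : Γ ≤ ‖⟪h_r, v⟫_ℂ‖^2 := by
    rw [hvr]
    rw [hgdef] at hgε
    simp only at hgε
    rw [← e_un] at hgε
    nlinarith [hNpos, hτ2, sq_nonneg (‖b + (ε:ℂ) * s * z‖)]
  have hvc : ‖⟪h_c, v⟫_ℂ‖^2 = τ^2 * (A + ε*‖h_c‖^2)^2 := by
    have : ⟪h_c, v⟫_ℂ = (τ:ℂ) * (s * ((A + ε*‖h_c‖^2 : ℝ) : ℂ)) := by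
      rw [hvdef, inner_smul_right, e_uc, hsa]
      push_cast
      ring
    rw [this, norm_mul, norm_mul, hs1]
    simp only [Complex.norm_real, Real.norm_eq_abs, abs_of_nonneg hτpos.le]
    rw [abs_of_nonneg (by positivity : (0:ℝ) ≤ A + ε*‖h_c‖^2)]
    ring
  have hle := hopt v hvn.le hfr
  rw [hvc] at hle
  clear_value a b z A s u τ v
  -- contradiction: P*(A+εH²)² > A²*N
  have hkey := aux_poly P A ε ‖h_c‖ hεpos hApos hstrict
  rw [← e_un] at hkey
  have h5 : τ^2 * (A + ε*‖h_c‖^2)^2 * ‖u‖^2 ≤ A^2 * ‖u‖^2 :=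
    mul_le_mul_of_nonneg_right hle hNpos.le
  have h6 : τ^2 * (A + ε*‖h_c‖^2)^2 * ‖u‖^2 = P * (A + ε*‖h_c‖^2)^2 := by
    rw [← hτ2]; ring
  linarith
end

section
/- Let h_c, h_r ∈ ℂ^M with ‖h_c‖, ‖h_r‖ > 0, let φ ∈ [0, π/2] with cos φ = |h_cᴴh_r|/(‖h_c‖‖h_r‖), and let Γ ∈ (P‖h_r‖²cos²φ, P‖h_r‖²]. Then the maximum of |h_cᴴw|² over w ∈ ℂ^M satisfying ‖w‖² ≤ P and |h_rᴴw|² ≥ Γ equals (‖h_c‖²/‖h_r‖²)·(√Γ·cos φ + √(P‖h_r‖² − Γ)·sin φ)². -/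
open scoped InnerProductSpace


lemma key_ineq (c d t₀ s₀ t s P : ℝ) (hc : 0 ≤ c) (hd : 0 ≤ d)
    (ht₀ : 0 ≤ t₀) (hs₀ : 0 ≤ s₀) (hs : 0 ≤ s) (ht : t₀ ≤ t)
    (hsum : t^2 + s^2 ≤ P) (hs₀2 : s₀^2 = P - t₀^2) (hkey : c * s₀ ≤ d * t₀) :
    c*t + d*s ≤ c*t₀ + d*s₀ := by
  have hss : s ≤ s₀ := by nlinarith
  rcases eq_or_lt_of_le (add_nonneg hs₀ hs) with h0 | h0
  · have hs0 : s = 0 := by linarith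
    have hs₀0 : s₀ = 0 := by linarith
    have htt : t ≤ t₀ := by nlinarith
    have : t = t₀ := le_antisymm htt ht
    simp [this, hs0, hs₀0]
  · have h1 : t^2 - t₀^2 ≤ s₀^2 - s^2 := by nlinarith
    have h2 : c*(s₀+s) ≤ d*(t₀+t) := by nlinarith
    have h3 : 0 ≤ (t - t₀) * (d*(t+t₀) - c*(s₀+s)) :=
      mul_nonneg (by linarith) (by nlinarith)
    have h4 : c*(t-t₀)*(s₀+s) ≤ d*(s₀-s)*(s₀+s) := by nlinarith
    have := (mul_le_mul_iff_of_pos_right h0).mp h4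
    linarith

lemma sq_eq_of_nonneg {a b : ℝ} (ha : 0 ≤ a) (hb : 0 ≤ b) (h : a^2 = b^2) : a = b := by
  nlinarith [sq_nonneg (a - b), sq_nonneg (a + b)]

lemma le_of_sq_le {a b : ℝ} (ha : 0 ≤ a) (hb : 0 ≤ b) (h : a^2 ≤ b^2) : a ≤ b := by
  nlinarith

lemma pyth {E : Type*} [NormedAddCommGroup E] [InnerProductSpace ℂ E] {x y : E}
    (h : ⟪x, y⟫_ℂ = 0) : ‖x + y‖^2 = ‖x‖^2 + ‖y‖^2 := by
  rw [sq, sq, sq]; exact norm_add_sq_eq_norm_sq_add_norm_sq_of_inner_eq_zero x y h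

lemma aux {E : Type*} [NormedAddCommGroup E] [InnerProductSpace ℂ E]
    (h_c h_r : E) (hrpos : 0 < ‖h_r‖) :
    ∃ q : ℝ, 0 ≤ q ∧ q^2 = ‖h_c‖^2 - ‖⟪h_c, h_r⟫_ℂ‖^2 / ‖h_r‖^2 ∧
    (∀ w : E, ∃ s : ℝ, 0 ≤ s ∧
      (‖⟪h_r, w⟫_ℂ‖ / ‖h_r‖)^2 + s^2 = ‖w‖^2 ∧
      ‖⟪h_c, w⟫_ℂ‖ ≤ (‖⟪h_c, h_r⟫_ℂ‖ / ‖h_r‖) * (‖⟪h_r, w⟫_ℂ‖ / ‖h_r‖) + q * s) ∧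
    (0 < q → ∀ t s : ℝ, 0 ≤ t → 0 ≤ s → ∃ w : E,
      ‖w‖^2 = t^2 + s^2 ∧ ‖⟪h_r, w⟫_ℂ‖ = t * ‖h_r‖ ∧
      ‖⟪h_c, w⟫_ℂ‖ = (‖⟪h_c, h_r⟫_ℂ‖ / ‖h_r‖) * t + q * s) := by
  set r : ℝ := ‖h_r‖ with hr_def
  have hrne : r ≠ 0 := ne_of_gt hrpos
  have hr2 : (0:ℝ) < r^2 := by positivity
  set z : ℂ := ⟪h_c, h_r⟫_ℂ with hz_def
  set b : ℂ := ⟪h_r, h_c⟫_ℂ / ((r:ℂ)^2) with hb_def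
  set hcp : E := h_c - b • h_r with hcp_def
  have hrr : ⟪h_r, h_r⟫_ℂ = ((r:ℂ)^2) := by
    rw [inner_self_eq_norm_sq_to_K]; norm_num; rfl
  have hr2c : ((r:ℂ)^2) ≠ 0 := by simp [hrne]
  have horth : ⟪h_r, hcp⟫_ℂ = 0 := by
    rw [hcp_def, inner_sub_right, inner_smul_right, hrr, hb_def]
    field_simp; rw [div_self (show (r:ℂ) ≠ 0 by exact_mod_cast hrne), sub_self, mul_zero]
  have hdecomp : h_c = b • h_r + hcp := by rw [hcp_def]; abel
  have hconj : ⟪h_r, h_c⟫_ℂ = (starRingEnd ℂ) z := by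
    rw [hz_def, ← inner_conj_symm]
  have hrcnorm : ‖((r:ℂ)^2)‖ = r^2 := by
    rw [norm_pow, Complex.norm_real, Real.norm_of_nonneg hrpos.le]
  have hbz : ‖b‖ = ‖z‖ / r^2 := by
    rw [hb_def, hconj, norm_div, RCLike.norm_conj, hrcnorm]
  have hq2 : ‖hcp‖^2 = ‖h_c‖^2 - ‖z‖^2 / r^2 := by
    have hpyth : ‖h_c‖^2 = ‖b • h_r‖^2 + ‖hcp‖^2 := by
      conv_lhs => rw [hdecomp]
      exact pyth (by rw [inner_smul_left, horth, mul_zero])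
    have hb2 : ‖b • h_r‖^2 = ‖z‖^2 / r^2 := by
      rw [norm_smul, hbz, ← hr_def, mul_pow, div_pow]
      field_simp
    rw [hpyth, hb2]; ring
  have hchcp : ⟪h_c, hcp⟫_ℂ = ((‖hcp‖^2 : ℝ) : ℂ) := by
    conv_lhs => rw [hdecomp]
    rw [inner_add_left, inner_smul_left, horth, mul_zero, zero_add,
      inner_self_eq_norm_sq_to_K]
    norm_num
  refine ⟨‖hcp‖, norm_nonneg _, hq2, ?_, ?_⟩
  · -- bound
    intro w
    set a : ℂ := ⟪h_r, w⟫_ℂ / ((r:ℂ)^2) with ha_def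
    set wp : E := w - a • h_r with hwp_def
    have horthw : ⟪h_r, wp⟫_ℂ = 0 := by
      rw [hwp_def, inner_sub_right, inner_smul_right, hrr, ha_def]
      field_simp; rw [div_self (show (r:ℂ) ≠ 0 by exact_mod_cast hrne), sub_self, mul_zero]
    have hwdecomp : w = a • h_r + wp := by rw [hwp_def]; abel
    have hrw : ⟪h_r, w⟫_ℂ = a * ((r:ℂ)^2) := by rw [ha_def]; field_simp; rw [mul_div_assoc, div_self (show (r:ℂ) ≠ 0 by exact_mod_cast hrne), mul_one]
    have hrwn : ‖⟪h_r, w⟫_ℂ‖ / r = ‖a‖ * r := by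
      rw [hrw, norm_mul, hrcnorm]; field_simp
    refine ⟨‖wp‖, norm_nonneg _, ?_, ?_⟩
    · rw [hrwn]
      have hpyth : ‖w‖^2 = ‖a • h_r‖^2 + ‖wp‖^2 := by
        conv_lhs => rw [hwdecomp]
        exact pyth (by rw [inner_smul_left, horthw, mul_zero])
      rw [hpyth, norm_smul, ← hr_def]
    · have h1 : ⟪h_c, w⟫_ℂ = a * z + ⟪hcp, wp⟫_ℂ := by
        conv_lhs => rw [hwdecomp]
        rw [inner_add_right, inner_smul_right]
        congr 1
        conv_lhs => rw [hdecomp]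
        rw [inner_add_left, inner_smul_left, horthw, mul_zero, zero_add]
      rw [hrwn]
      calc ‖⟪h_c, w⟫_ℂ‖ ≤ ‖a * z‖ + ‖⟪hcp, wp⟫_ℂ‖ := by
            rw [h1]; exact norm_add_le _ _
        _ ≤ ‖a‖ * ‖z‖ + ‖hcp‖ * ‖wp‖ := by
            rw [norm_mul]
            exact add_le_add le_rfl (norm_inner_le_norm _ _)
        _ = ‖z‖ / r * (‖a‖ * r) + ‖hcp‖ * ‖wp‖ := by field_simp
  · -- existence
    intro hq t s ht hs
    have hqne : ‖hcp‖ ≠ 0 := ne_of_gt hq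
    set ph : ℂ := if z = 0 then 1 else (starRingEnd ℂ) z / ‖z‖ with hph_def
    have hph_norm : ‖ph‖ = 1 := by
      rw [hph_def]; split_ifs with h
      · simp
      · rw [norm_div, RCLike.norm_conj, Complex.norm_real, norm_norm,
          div_self (norm_ne_zero_iff.2 h)]
    have hph_mul : ph * z = ((‖z‖ : ℝ) : ℂ) := by
      rw [hph_def]; split_ifs with h
      · simp [h]
      · rw [div_mul_eq_mul_div, Complex.conj_mul']
        have hz0 : ((‖z‖:ℝ):ℂ) ≠ 0 := by
          simpa using h
        rw [pow_two, mul_div_assoc, div_self hz0, mul_one]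
    refine ⟨((t/r : ℝ) * ph) • h_r + ((s/‖hcp‖ : ℝ) : ℂ) • hcp, ?_, ?_, ?_⟩
    · have hpyth : ‖((t/r : ℝ) * ph) • h_r + ((s/‖hcp‖ : ℝ) : ℂ) • hcp‖^2
          = ‖((t/r : ℝ) * ph) • h_r‖^2 + ‖((s/‖hcp‖ : ℝ) : ℂ) • hcp‖^2 := by
        exact pyth (by rw [inner_smul_left, inner_smul_right, horth, mul_zero, mul_zero])
      rw [hpyth, norm_smul, norm_smul, norm_mul, hph_norm, ← hr_def]
      rw [Complex.norm_real, Complex.norm_real,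
        Real.norm_of_nonneg (show (0:ℝ) ≤ t/r by positivity),
        Real.norm_of_nonneg (show (0:ℝ) ≤ s/‖hcp‖ by positivity)]
      field_simp
    · rw [inner_add_right, inner_smul_right, inner_smul_right, horth, mul_zero,
        add_zero, hrr]
      rw [norm_mul, norm_mul, hph_norm, hrcnorm, Complex.norm_real,
        Real.norm_of_nonneg (show (0:ℝ) ≤ t/r by positivity)]
      field_simp
    · rw [inner_add_right, inner_smul_right, inner_smul_right, hchcp]
      rw [mul_assoc, hph_mul]
      have : ((t/r : ℝ) : ℂ) * ((‖z‖ : ℝ) : ℂ) + ((s/‖hcp‖ : ℝ) : ℂ) * ((‖hcp‖^2 : ℝ) : ℂ)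
          = (((t/r) * ‖z‖ + (s/‖hcp‖) * ‖hcp‖^2 : ℝ) : ℂ) := by push_cast; ring
      rw [this, Complex.norm_real,
        Real.norm_of_nonneg (show (0:ℝ) ≤ t/r*‖z‖ + s/‖hcp‖*‖hcp‖^2 by positivity)]
      field_simp

set_option maxHeartbeats 1000000 in
theorem stmt_3 {M : ℕ} (h_c h_r : EuclideanSpace ℂ (Fin M))
    (hc : 0 < ‖h_c‖) (hr : 0 < ‖h_r‖) (P Γ φ : ℝ) (hP : 0 < P)
    (hφ0 : 0 ≤ φ) (hφ1 : φ ≤ Real.pi / 2)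
    (hcos : Real.cos φ = ‖⟪h_c, h_r⟫_ℂ‖ / (‖h_c‖ * ‖h_r‖))
    (hΓlo : P * ‖h_r‖ ^ 2 * Real.cos φ ^ 2 < Γ) (hΓhi : Γ ≤ P * ‖h_r‖ ^ 2) :
    IsGreatest
      {x : ℝ | ∃ w : EuclideanSpace ℂ (Fin M),
        ‖w‖ ^ 2 ≤ P ∧ Γ ≤ ‖⟪h_r, w⟫_ℂ‖ ^ 2 ∧ x = ‖⟪h_c, w⟫_ℂ‖ ^ 2}
      ((‖h_c‖ ^ 2 / ‖h_r‖ ^ 2) *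
        (Real.sqrt Γ * Real.cos φ + Real.sqrt (P * ‖h_r‖ ^ 2 - Γ) * Real.sin φ) ^ 2) := by
  obtain ⟨q, hq0, hq2, hbound, hexist⟩ := aux h_c h_r hr
  set r : ℝ := ‖h_r‖ with hr_def
  set z : ℂ := ⟪h_c, h_r⟫_ℂ with hz_def
  set c : ℝ := Real.cos φ with hc_def
  set d : ℝ := Real.sin φ with hd_def
  have hrne : r ≠ 0 := ne_of_gt hr
  have hr2 : (0:ℝ) < r^2 := by positivity
  have hc0 : 0 ≤ c := by rw [hcos]; positivity
  have hd0 : 0 ≤ d := Real.sin_nonneg_of_nonneg_of_le_pi hφ0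
    (by linarith [Real.pi_pos])
  have hd2 : d^2 = 1 - c^2 := Real.sin_sq φ
  have hΓ0 : 0 < Γ := lt_of_le_of_lt (by positivity) hΓlo
  have hPΓ : 0 ≤ P * r^2 - Γ := by linarith
  have hznorm : ‖z‖ = ‖h_c‖ * r * c := by rw [hcos]; field_simp
  have hc1 : c^2 < 1 := by nlinarith
  have hdpos : 0 < d := by nlinarith
  have hq : q = ‖h_c‖ * d := by
    apply sq_eq_of_nonneg hq0 (by positivity)
    rw [hq2, hznorm]
    have : (‖h_c‖*d)^2 = ‖h_c‖^2 * (1 - c^2) := by rw [mul_pow, hd2]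
    rw [this]
    field_simp
  have hqpos : 0 < q := by rw [hq]; positivity
  set t₀ : ℝ := Real.sqrt Γ / r with ht₀_def
  set s₀ : ℝ := Real.sqrt (P * r^2 - Γ) / r with hs₀_def
  have ht₀ : 0 ≤ t₀ := by positivity
  have hs₀ : 0 ≤ s₀ := by positivity
  have ht₀2 : t₀^2 = Γ / r^2 := by
    rw [ht₀_def, div_pow, Real.sq_sqrt hΓ0.le]
  have hs₀2 : s₀^2 = P - t₀^2 := by
    rw [hs₀_def, div_pow, Real.sq_sqrt hPΓ, ht₀2]; field_simp
  have hkey : c * s₀ ≤ d * t₀ := by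
    apply le_of_sq_le (by positivity) (by positivity)
    rw [mul_pow, mul_pow, hs₀2, hd2, ht₀2]
    have hgoal : (c^2*(P - Γ/r^2)) * r^2 ≤ ((1-c^2)*(Γ/r^2)) * r^2 := by
      have e1 : (c^2*(P - Γ/r^2)) * r^2 = c^2*(P*r^2 - Γ) := by field_simp
      have e2 : ((1-c^2)*(Γ/r^2)) * r^2 = (1-c^2)*Γ := by field_simp
      rw [e1, e2]; nlinarith
    have := le_of_mul_le_mul_right hgoal hr2
    linarith
  have htarget : (‖h_c‖ ^ 2 / r ^ 2) *
      (Real.sqrt Γ * c + Real.sqrt (P * r ^ 2 - Γ) * d) ^ 2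
      = (‖h_c‖ * (c * t₀ + d * s₀))^2 := by
    rw [ht₀_def, hs₀_def]; field_simp
  rw [htarget]
  constructor
  · -- membership
    obtain ⟨w, hw1, hw2, hw3⟩ := hexist hqpos t₀ s₀ ht₀ hs₀
    refine ⟨w, ?_, ?_, ?_⟩
    · rw [hw1]; linarith
    · rw [hw2, mul_pow, ht₀2]
      field_simp; exact le_rfl
    · rw [hw3, hznorm, hq]
      field_simp
  · -- upper bound
    rintro x ⟨w, hw1, hw2, rfl⟩
    obtain ⟨s, hs, hsum, hle⟩ := hbound w
    set t : ℝ := ‖⟪h_r, w⟫_ℂ‖ / r with ht_def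
    have ht : 0 ≤ t := by positivity
    have hts : t^2 + s^2 ≤ P := by rw [hsum]; exact hw1
    have htt₀ : t₀ ≤ t := by
      apply le_of_sq_le ht₀ ht
      rw [ht₀2, ht_def, div_pow]
      gcongr
    have hcw : ‖⟪h_c, w⟫_ℂ‖ ≤ ‖h_c‖ * (c*t + d*s) := by
      calc ‖⟪h_c, w⟫_ℂ‖ ≤ (‖z‖ / r) * t + q * s := hle
        _ = ‖h_c‖ * (c*t + d*s) := by rw [hznorm, hq]; field_simp
    have hmain : c*t + d*s ≤ c*t₀ + d*s₀ :=
      key_ineq c d t₀ s₀ t s P hc0 hd0 ht₀ hs₀ hs htt₀ hts hs₀2 hkey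
    calc ‖⟪h_c, w⟫_ℂ‖^2 ≤ (‖h_c‖ * (c*t + d*s))^2 :=
          pow_le_pow_left₀ (norm_nonneg _) hcw 2
      _ ≤ (‖h_c‖ * (c*t₀ + d*s₀))^2 := by
          apply pow_le_pow_left₀ (by positivity)
          exact mul_le_mul_of_nonneg_left hmain (norm_nonneg _)
end

section
/- Let γ₀, M, P, Γ, H > 0 and D > 0 with M·P > Γ·(D² + H²) (feasibility). Define f(x) = (M·P − Γ·((D−x)² + H²))/(x² + H²) for x ∈ [0, D], representing SNR when the UAV is at horizontal distance x from the user along the user–target segment. Then f is maximized at x* = (√(Z² + 4H²) − Z)/2 where Z = M·P/(Γ·D) − D, and x* is the unique nonnegative root of x² + Z·x − H² = 0. -/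
theorem stmt_6 (γ₀ M P Γ H D : ℝ) (hγ : 0 < γ₀) (hM : 0 < M) (hP : 0 < P)
    (hΓ : 0 < Γ) (hH : 0 < H) (hD : 0 < D)
    (hfeas : Γ * (D ^ 2 + H ^ 2) < M * P) :
    let f : ℝ → ℝ := fun x => (M * P - Γ * ((D - x) ^ 2 + H ^ 2)) / (x ^ 2 + H ^ 2)
    let Z : ℝ := M * P / (Γ * D) - D
    let xstar : ℝ := (Real.sqrt (Z ^ 2 + 4 * H ^ 2) - Z) / 2
    (∀ x ∈ Set.Icc (0 : ℝ) D, f x ≤ f xstar) ∧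
    xstar ^ 2 + Z * xstar - H ^ 2 = 0 ∧ 0 ≤ xstar ∧
    ∀ x : ℝ, 0 ≤ x → x ^ 2 + Z * x - H ^ 2 = 0 → x = xstar := by
  intro f Z xstar
  have hf : f = fun x => (M * P - Γ * ((D - x) ^ 2 + H ^ 2)) / (x ^ 2 + H ^ 2) := rfl
  have hZ : Z = M * P / (Γ * D) - D := rfl
  have hxs : xstar = (Real.sqrt (Z ^ 2 + 4 * H ^ 2) - Z) / 2 := rfl
  clear_value f Z xstar
  have hsq : Real.sqrt (Z ^ 2 + 4 * H ^ 2) ^ 2 = Z ^ 2 + 4 * H ^ 2 :=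
    Real.sq_sqrt (by positivity)
  have hroot : xstar ^ 2 + Z * xstar - H ^ 2 = 0 := by
    rw [hxs]; linear_combination hsq / 4
  have hsle : Z ≤ Real.sqrt (Z ^ 2 + 4 * H ^ 2) := by
    nlinarith [Real.sqrt_nonneg (Z ^ 2 + 4 * H ^ 2), hsq]
  have hxnn : 0 ≤ xstar := by rw [hxs]; linarith
  have hxpos : 0 < xstar := by
    rcases hxnn.lt_or_eq with h | h
    · exact h
    · exfalso
      rw [← h] at hroot
      nlinarith
  have hZdef : Γ * D * Z = M * P - Γ * D ^ 2 := by
    rw [hZ]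
    field_simp
  have hS : 0 < M * P - Γ * (D ^ 2 + H ^ 2) + 2 * Γ * D * xstar + Γ * H ^ 2 := by
    have h1 : 0 < Γ * D * xstar := by positivity
    have h2 : 0 < Γ * H ^ 2 := by positivity
    linarith
  refine ⟨?_, hroot, hxnn, ?_⟩
  · intro x hx
    rw [hf]
    simp only
    rw [div_le_div_iff₀ (by positivity) (by positivity)]
    have key : (M * P - Γ * ((D - xstar) ^ 2 + H ^ 2)) * (x ^ 2 + H ^ 2)
        - (M * P - Γ * ((D - x) ^ 2 + H ^ 2)) * (xstar ^ 2 + H ^ 2)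
        = (x - xstar) ^ 2
          * (M * P - Γ * (D ^ 2 + H ^ 2) + 2 * Γ * D * xstar + Γ * H ^ 2) := by
      linear_combination (x - xstar) * (2 * Γ * D) * hroot
        - (x - xstar) * (2 * xstar) * (hZdef.symm)
        - (x - xstar) * (4 * xstar) * hZdef
    nlinarith [mul_nonneg (sq_nonneg (x - xstar)) hS.le, key]
  · intro x hx0 hx
    have hZs : 0 < xstar + Z := by nlinarith
    have h1 : (x - xstar) * (x + xstar + Z) = 0 := by linear_combination hx - hroot
    rcases mul_eq_zero.mp h1 with h | h
    · linarith
    · linarith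
end

section
/- Let L, N_L, N'_L, Δl ∈ ℕ with N'_L > N_L, Δl = N/N_L − N/N'_L ≥ 0 where N = L·N_L, and let C* ≥ 0 be the optimal per-frame sum rate with frame length N_L, with R_max ≥ C*/N_L the maximum per-slot rate in the optimal frame. Then (L − Δl)·(C* + (N'_L − N_L)·R_max) ≥ L·C*, i.e., the total achievable rate with the longer frame length N'_L is at least that with frame length N_L. -/
theorem stmt_18 (L N_L N'_L N Δl : ℕ) (Cstar Rmax : ℝ)
    (hNL : 0 < N_L) (hNL' : N_L < N'_L) (hN : N = L * N_L)
    (hΔl : (Δl : ℝ) = (N : ℝ) / (N_L : ℝ) - (N : ℝ) / (N'_L : ℝ))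
    (hC : 0 ≤ Cstar) (hR : Cstar / (N_L : ℝ) ≤ Rmax) :
    (L : ℝ) * Cstar ≤
      ((L : ℝ) - (Δl : ℝ)) * (Cstar + ((N'_L : ℝ) - (N_L : ℝ)) * Rmax) := by
  have hNL0 : (0:ℝ) < N_L := by exact_mod_cast hNL
  have hN'0 : (0:ℝ) < N'_L := by exact_mod_cast hNL.trans hNL'
  have hN'N : (N_L:ℝ) ≤ N'_L := by exact_mod_cast hNL'.le
  have hRmax : Cstar ≤ (N_L:ℝ) * Rmax := by
    rw [div_le_iff₀ hNL0] at hR; linarith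
  have hL0 : (0:ℝ) ≤ L := Nat.cast_nonneg L
  subst hN
  have hNc : ((L * N_L : ℕ) : ℝ) = (L:ℝ) * N_L := by push_cast; ring
  rw [hNc] at hΔl
  have hΔ : (Δl:ℝ) = (L:ℝ) - (L:ℝ) * N_L / N'_L := by
    rw [hΔl, mul_div_assoc, div_self hNL0.ne', mul_one]
  rw [hΔ]
  have h1 : ((L:ℝ) - ((L:ℝ) - (L:ℝ) * N_L / N'_L)) = (L:ℝ) * N_L / N'_L := by ring
  rw [h1, div_mul_eq_mul_div, le_div_iff₀ hN'0]
  nlinarith [mul_nonneg hL0 (mul_nonneg (sub_nonneg.mpr hN'N) (sub_nonneg.mpr hRmax)),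
    mul_nonneg hL0 hC]
end

section
/- Let γ₀, M, P, Γ > 0, and let d_v, d_u > 0 with M·P ≥ Γ·d_v². For any ρ ∈ [0,1], the quantity γ(ρ) = γ₀·(d_v²/d_u²)·(ρ√Γ + √(1−ρ²)·√(MP/d_v² − Γ))² satisfies γ(ρ) ≥ γ₀·(MP − Γ·d_v²)/d_u² whenever additionally M·P·ρ² ≤ Γ·d_v², and at ρ = 1 (coinciding user and target directions) γ(1) = γ₀·Γ·d_v²/d_u². -/
theorem stmt_19 (γ₀ M P Γ dv du : ℝ) (hγ : 0 < γ₀) (hM : 0 < M) (hP : 0 < P)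
    (hΓ : 0 < Γ) (hdv : 0 < dv) (hdu : 0 < du) (hfeas : Γ * dv ^ 2 ≤ M * P) :
    let γ : ℝ → ℝ := fun ρ => γ₀ * (dv ^ 2 / du ^ 2) *
      (ρ * Real.sqrt Γ + Real.sqrt (1 - ρ ^ 2) * Real.sqrt (M * P / dv ^ 2 - Γ)) ^ 2
    (∀ ρ : ℝ, 0 ≤ ρ → ρ ≤ 1 → M * P * ρ ^ 2 ≤ Γ * dv ^ 2 →
      γ₀ * (M * P - Γ * dv ^ 2) / du ^ 2 ≤ γ ρ) ∧
    γ 1 = γ₀ * Γ * dv ^ 2 / du ^ 2 := by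
  intro γ
  have hdv2 : (0:ℝ) < dv ^ 2 := by positivity
  have hdu2 : (0:ℝ) < du ^ 2 := by positivity
  have hΓA : Γ ≤ M * P / dv ^ 2 := by
    rw [le_div_iff₀ hdv2]; linarith
  have ht : Real.sqrt (M * P / dv ^ 2 - Γ) ^ 2 = M * P / dv ^ 2 - Γ :=
    Real.sq_sqrt (by linarith)
  have hg : Real.sqrt Γ ^ 2 = Γ := Real.sq_sqrt hΓ.le
  have htn : 0 ≤ Real.sqrt (M * P / dv ^ 2 - Γ) := Real.sqrt_nonneg _
  have hgn : 0 ≤ Real.sqrt Γ := Real.sqrt_nonneg _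
  constructor
  · intro ρ h0 h1 hcond
    set t := Real.sqrt (M * P / dv ^ 2 - Γ) with htdef
    set g := Real.sqrt Γ with hgdef
    set s := Real.sqrt (1 - ρ ^ 2) with hsdef
    have hs : s ^ 2 = 1 - ρ ^ 2 := Real.sq_sqrt (by nlinarith)
    have hsn : 0 ≤ s := Real.sqrt_nonneg _
    -- ρ * t ≤ g
    have hρA : ρ ^ 2 * (M * P / dv ^ 2) ≤ Γ := by
      rw [mul_div_assoc', div_le_iff₀ hdv2]; nlinarith
    have hρt : ρ * t ≤ g := by
      nlinarith [sq_nonneg (ρ * t - g), sq_nonneg (ρ * t + g), mul_nonneg h0 htn]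
    -- 1 - s ≤ ρ ^ 2
    have hs1 : s ≤ 1 := by nlinarith [sq_nonneg (s - 1)]
    have h1s : 1 - s ≤ ρ ^ 2 := by nlinarith [mul_nonneg hsn (sub_nonneg.2 hs1)]
    -- key: ρ g + s t ≥ t
    have h2 : (1 - s) * t ≤ ρ ^ 2 * t := mul_le_mul_of_nonneg_right h1s htn
    have h3 : ρ ^ 2 * t ≤ ρ * g := by
      have h4 := mul_le_mul_of_nonneg_left hρt h0
      linarith only [h4]
    have hkey : t ≤ ρ * g + s * t := by linarith only [h2, h3]
    have hsum : t ^ 2 ≤ (ρ * g + s * t) ^ 2 := pow_le_pow_left₀ htn hkey 2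
    have hfinal : M * P / dv ^ 2 - Γ ≤ (ρ * g + s * t) ^ 2 := by rw [← ht]; exact hsum
    show γ₀ * (M * P - Γ * dv ^ 2) / du ^ 2 ≤ γ₀ * (dv ^ 2 / du ^ 2) * (ρ * g + s * t) ^ 2
    have heq : γ₀ * (M * P - Γ * dv ^ 2) / du ^ 2 = γ₀ * (dv ^ 2 / du ^ 2) * (M * P / dv ^ 2 - Γ) := by
      field_simp
    rw [heq]
    exact mul_le_mul_of_nonneg_left hfinal (by positivity)
  · show γ₀ * (dv ^ 2 / du ^ 2) *
      ((1:ℝ) * Real.sqrt Γ + Real.sqrt (1 - 1 ^ 2) * Real.sqrt (M * P / dv ^ 2 - Γ)) ^ 2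
      = γ₀ * Γ * dv ^ 2 / du ^ 2
    have : (1:ℝ) - 1 ^ 2 = 0 := by ring
    rw [this, Real.sqrt_zero]
    calc γ₀ * (dv ^ 2 / du ^ 2) * (1 * Real.sqrt Γ + 0 * Real.sqrt (M * P / dv ^ 2 - Γ)) ^ 2
        = γ₀ * (dv ^ 2 / du ^ 2) * Real.sqrt Γ ^ 2 := by ring
      _ = γ₀ * Γ * dv ^ 2 / du ^ 2 := by rw [hg]; ring
end
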